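/- Let D₋₂, D₋₁, D₀, D₁, D₂ be the five 3×3 complex matrices defined by (D_m)_{ij} = n^{(i−2)}_{j, m+3}, where N⁽⁻¹⁾, N⁽⁰⁾, N⁽¹⁾ are the explicit 3×5 matrices given by: N⁽⁻¹⁾ has rows (3√5/5, 0, −√30/10, 0, 0), (3√5/5·i, 0, √30/10·i, 0, 0), (0, 3√5/5, 0, 0, 0); N⁽⁰⁾ has rows (0, 3√10/10, 0, −3√10/10, 0), (0, 3√10/10·i, 0, 3√10/10·i, 0), (0, 0, 2√15/5, 0, 0); N⁽¹⁾ has rows (0, 0, √30/10, 0, −3√5/5), (0, 0, √30/10·i, 0, 3√5/5·i), (0, 0, 0, 3√5/5, 0). Then for every nonzero vector a ∈ ℂ³, the 3×5 matrix with columns D₋₂a, D₋₁a, D₀a, D₁a, D₂a has rank 3. -/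

import Mathlib

/-!
Put `u = a₀ + i a₁` and `v = -a₀ + i a₁`. Row `k` of the matrix with columns `D_m a` is
supported on columns `k, k+1, k+2`, with entries nonzero multiples of `u`, `a₂`, `v`
(`bandMatrix u a₂ v`). If `u ≠ 0`, the first three columns form a triangular minor with
diagonal proportional to `u`; if `v ≠ 0`, so do the last three, with `v`; otherwise
`a = (0, 0, a₂)` with `a₂ ≠ 0` and the middle three columns form a diagonal minor.
-/
open Real Complex Matrix

/-- `N⁽⁻¹⁾, N⁽⁰⁾, N⁽¹⁾`: the explicit `3×5` complex matrices of the paper,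
indexed here by `Fin 3` (index `h` corresponds to `N⁽ʰ⁻¹⁾`). -/
noncomputable def Nmat : Fin 3 → Matrix (Fin 3) (Fin 5) ℂ :=
  ![!![((3 * Real.sqrt 5 / 5 : ℝ) : ℂ), 0, -((Real.sqrt 30 / 10 : ℝ) : ℂ), 0, 0;
      ((3 * Real.sqrt 5 / 5 : ℝ) : ℂ) * Complex.I, 0,
        ((Real.sqrt 30 / 10 : ℝ) : ℂ) * Complex.I, 0, 0;
      0, ((3 * Real.sqrt 5 / 5 : ℝ) : ℂ), 0, 0, 0],
    !![0, ((3 * Real.sqrt 10 / 10 : ℝ) : ℂ), 0, -((3 * Real.sqrt 10 / 10 : ℝ) : ℂ), 0;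
      0, ((3 * Real.sqrt 10 / 10 : ℝ) : ℂ) * Complex.I, 0,
        ((3 * Real.sqrt 10 / 10 : ℝ) : ℂ) * Complex.I, 0;
      0, 0, ((2 * Real.sqrt 15 / 5 : ℝ) : ℂ), 0, 0],
    !![0, 0, ((Real.sqrt 30 / 10 : ℝ) : ℂ), 0, -((3 * Real.sqrt 5 / 5 : ℝ) : ℂ);
      0, 0, ((Real.sqrt 30 / 10 : ℝ) : ℂ) * Complex.I, 0,
        ((3 * Real.sqrt 5 / 5 : ℝ) : ℂ) * Complex.I;
      0, 0, 0, ((3 * Real.sqrt 5 / 5 : ℝ) : ℂ), 0]]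

/-- The `3×3` matrices `D_m` (`m = -2,…,2`, indexed here by `Fin 5`):
`(D_m)_{ij} = n^{(i-2)}_{j, m+3}`. -/
noncomputable def Dmat (m : Fin 5) : Matrix (Fin 3) (Fin 3) ℂ :=
  Matrix.of fun i j => Nmat i j m

namespace Matrix

theorem rank_eq_card_height_of_isUnit_det_submatrix {m n R : Type*} [Fintype m] [Fintype n]
    [DecidableEq m] [CommRing R] [StrongRankCondition R] (A : Matrix m n R) (c : m → n)
    (h : IsUnit (A.submatrix id c).det) : A.rank = Fintype.card m :=
  le_antisymm A.rank_le_card_height <| by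
    rw [← rank_of_isUnit _ ((isUnit_iff_isUnit_det _).2 h)]
    exact rank_submatrix_le A id c

end Matrix

noncomputable def bandMatrix (u w v : ℂ) : Matrix (Fin 3) (Fin 5) ℂ :=
  !![((3 * Real.sqrt 5 / 5 : ℝ) : ℂ) * u, ((3 * Real.sqrt 5 / 5 : ℝ) : ℂ) * w,
      ((Real.sqrt 30 / 10 : ℝ) : ℂ) * v, 0, 0;
    0, ((3 * Real.sqrt 10 / 10 : ℝ) : ℂ) * u, ((2 * Real.sqrt 15 / 5 : ℝ) : ℂ) * w,
      ((3 * Real.sqrt 10 / 10 : ℝ) : ℂ) * v, 0;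
    0, 0, ((Real.sqrt 30 / 10 : ℝ) : ℂ) * u, ((3 * Real.sqrt 5 / 5 : ℝ) : ℂ) * w,
      ((3 * Real.sqrt 5 / 5 : ℝ) : ℂ) * v]

theorem D_columns_eq_bandMatrix (a : Fin 3 → ℂ) :
    (Matrix.of fun (i : Fin 3) (m : Fin 5) => (Dmat m).mulVec a i) =
      bandMatrix (a 0 + I * a 1) (a 2) (-a 0 + I * a 1) := by
  ext i m
  fin_cases i <;> fin_cases m <;>
    simp only [bandMatrix, Dmat, Nmat, mulVec, dotProduct, Fin.sum_univ_three, of_apply,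
      Fin.zero_eta, Fin.mk_one, Fin.reduceFinMk, cons_val', cons_val, cons_val_zero, cons_val_one,
      cons_val_fin_one] <;> ring

theorem det_bandMatrix_submatrix_left_ne_zero {u : ℂ} (w v : ℂ) (hu : u ≠ 0) :
    ((bandMatrix u w v).submatrix id ![0, 1, 2]).det ≠ 0 := by
  simp [bandMatrix, det_fin_three, hu]

theorem det_bandMatrix_submatrix_right_ne_zero (u w : ℂ) {v : ℂ} (hv : v ≠ 0) :
    ((bandMatrix u w v).submatrix id ![2, 3, 4]).det ≠ 0 := by
  simp [bandMatrix, det_fin_three, hv]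

theorem det_bandMatrix_zero_submatrix_middle_ne_zero {w : ℂ} (hw : w ≠ 0) :
    ((bandMatrix 0 w 0).submatrix id ![1, 2, 3]).det ≠ 0 := by
  simp [bandMatrix, det_fin_three, hw]

theorem rank_bandMatrix {u w v : ℂ} (h : ¬(u = 0 ∧ w = 0 ∧ v = 0)) :
    (bandMatrix u w v).rank = 3 := by
  rcases ne_or_eq u 0 with hu | rfl
  · exact rank_eq_card_height_of_isUnit_det_submatrix _ _
      (det_bandMatrix_submatrix_left_ne_zero w v hu).isUnit
  rcases ne_or_eq v 0 with hv | rfl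
  · exact rank_eq_card_height_of_isUnit_det_submatrix _ _
      (det_bandMatrix_submatrix_right_ne_zero 0 w hv).isUnit
  have hw : w ≠ 0 := by tauto
  exact rank_eq_card_height_of_isUnit_det_submatrix _ _
    (det_bandMatrix_zero_submatrix_middle_ne_zero hw).isUnit

/-- For every nonzero `a ∈ ℂ³`, the `3×5` matrix with columns
`D₋₂a, D₋₁a, D₀a, D₁a, D₂a` has rank `3`. -/
theorem rank_D_columns_eq_three (a : Fin 3 → ℂ) (ha : a ≠ 0) :
    (Matrix.of fun (i : Fin 3) (m : Fin 5) => (Dmat m).mulVec a i).rank = 3 := by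
  rw [D_columns_eq_bandMatrix]
  refine rank_bandMatrix fun ⟨hu, hw, hv⟩ => ha ?_
  have h0 : a 0 = 0 := by linear_combination (hu - hv) / 2
  have h1 : a 1 = 0 := by linear_combination (-I / 2) * (hu + hv) + a 1 * I_sq
  ext i
  fin_cases i <;> simp [h0, h1, hw]
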